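/- arXiv:2503.12283 — 2 statements merged into one kernel-verified Lean document; each statement's English description precedes it below -/
import Mathlib

section
/- For every fixed exploratory evaluation policy π ∈ Π0, the distribution shift function f_π: Ξ0 → Ξ0 is continuous on Ξ0. -/
/-!
For `ξ0 ∈ Ξ₀` the kernel `Q` depends continuously on `ξ0`, and since `π > 0` the chain
`P((s,a),(s',a')) = π(a'|s') Q(s'|s,a)` is stochastic and irreducible. Such a chain has at most one
stationary distribution `μ`, and `I - P + J` (`J` the all-ones matrix) is invertible: a row vector
`w` killed by it has zero sum and is fixed by `P`, hence is a multiple of `μ` with zero sum. So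
`μ = 𝟙ᵀ (I - P + J)⁻¹` is a continuous function of `ξ0`, and so is
`f_π(ξ0)(s,a,s') = Q(s'|s,a) μ(s,a)`.
-/

open Filter Topology MeasureTheory
open scoped Classical

namespace OfflineRL

variable (S A : Type*) [Fintype S] [Fintype A] [DecidableEq S] [DecidableEq A]

/-- Stationary policies `Π`. -/
def policySet : Set (S → A → ℝ) :=
  {π | ∀ s, (∀ a, 0 ≤ π s a) ∧ ∑ a, π s a = 1}

/-- Exploratory (everywhere positive) policies `Π₀`. -/
def policyPos : Set (S → A → ℝ) :=
  {π | π ∈ policySet S A ∧ ∀ s a, 0 < π s a}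

/-- Policies `Π_ε`. -/
def policyEps (ε : ℝ) : Set (S → A → ℝ) :=
  {π | π ∈ policySet S A ∧ ∀ s a, ε ≤ π s a}

/-- Transition kernels `𝒬`. -/
def kernelSet : Set (S → A → S → ℝ) :=
  {Q | ∀ s a, (∀ s', 0 ≤ Q s a s') ∧ ∑ s', Q s a s' = 1}

/-- Kernels whose associated directed graph on `S × A` is strongly connected, `𝒬₀`. -/
def kernel0 : Set (S → A → S → ℝ) :=
  {Q | Q ∈ kernelSet S A ∧
    ∀ x y : S × A, Relation.ReflTransGen (fun u v : S × A => 0 < Q u.1 u.2 v.1) x y}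

/-- Probability simplex over the states. -/
def stateSimplex : Set (S → ℝ) := {p | (∀ s, 0 ≤ p s) ∧ ∑ s, p s = 1}

/-- `Ξ`: state-action-next-state distributions with balanced marginals. -/
def XiSet : Set (S × A × S → ℝ) :=
  {ξ | (∀ z, 0 ≤ ξ z) ∧ (∑ z, ξ z = 1) ∧
    ∀ s : S, (∑ s' : S, ∑ a : A, ξ (s, a, s')) = ∑ s' : S, ∑ a : A, ξ (s', a, s)}

/-- `Ξ₀`: elements of `Ξ` with strongly connected support graph. -/
def Xi0Set : Set (S × A × S → ℝ) :=
  {ξ | ξ ∈ XiSet S A ∧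
    ∀ x y : S × A, Relation.ReflTransGen (fun u v : S × A => 0 < ξ (u.1, u.2, v.1)) x y}

/-- Stationary state-action distribution `μ(s,a) = Σ_{s'} ξ(s,a,s')`. -/
noncomputable def muXi (ξ : S × A × S → ℝ) (x : S × A) : ℝ := ∑ s', ξ (x.1, x.2, s')

/-- Transition kernel `Q(s'|s,a)` determined by `ξ`. -/
noncomputable def QXi (ξ : S × A × S → ℝ) (s : S) (a : A) (s' : S) : ℝ :=
  ξ (s, a, s') / muXi S A ξ (s, a)

/-- Behavioral policy `π(a'|s')` determined by `ξ`. -/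
noncomputable def piXi (ξ : S × A × S → ℝ) (s' : S) (a' : A) : ℝ :=
  muXi S A ξ (s', a') / ∑ a, muXi S A ξ (s', a)

/-- Transition matrix of the state-action chain of `ξ`. -/
noncomputable def Pmat (ξ : S × A × S → ℝ) (x x' : S × A) : ℝ :=
  piXi S A ξ x'.1 x'.2 * QXi S A ξ x.1 x.2 x'.1

/-- Probability of a finite state-action trajectory under `ℙ_ξ` with initial distribution `η`. -/
noncomputable def trajP (ξ : S × A × S → ℝ) (η : S → ℝ) (T : ℕ) (xs : Fin T → S × A) : ℝ :=
  ∏ t : Fin T,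
    if (t : ℕ) = 0 then η (xs t).1 * piXi S A ξ (xs t).1 (xs t).2
    else Pmat S A ξ (xs ⟨(t : ℕ) - 1, Nat.lt_of_le_of_lt (Nat.sub_le _ _) t.isLt⟩) (xs t)

/-- Empirical state-action-next-state distribution (with the ghost transition from
`(S_T, A_T)` to `S_1`, which makes it cyclic). -/
noncomputable def empXi (T : ℕ) (xs : Fin T → S × A) : S × A × S → ℝ := fun z =>
  ((Finset.univ.filter fun t : Fin T =>
      xs t = (z.1, z.2.1) ∧
      (xs ⟨((t : ℕ) + 1) % T,
        Nat.mod_lt _ (Nat.lt_of_le_of_lt (Nat.zero_le _) t.isLt)⟩).1 = z.2.2).card : ℝ) / T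

/-- `ℙ_ξ(ξ̂_T ∈ 𝒟)`. -/
noncomputable def probXi (ξ : S × A × S → ℝ) (η : S → ℝ) (𝒟 : Set (S × A × S → ℝ))
    (T : ℕ) : ℝ :=
  ∑ xs : Fin T → S × A, 𝒟.indicator (fun _ => trajP S A ξ η T xs) (empXi S A T xs)

/-- Extended-real logarithm: `elog x = log x` for `x > 0` and `⊥` otherwise. -/
noncomputable def elog (x : ℝ) : EReal := if x ≤ 0 then ⊥ else ((Real.log x : ℝ) : EReal)

/-- Marginal state distribution `μ_S(s)`. -/
noncomputable def rowXi (ξ : S × A × S → ℝ) (s : S) : ℝ := ∑ a, ∑ s', ξ (s, a, s')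

/-- Conditional relative entropy for MDPs, with the conventions `0·log(0/t) = 0` and
`t·log(t/0) = ∞` for `t > 0`. -/
noncomputable def Dmdp (ξ' ξ : S × A × S → ℝ) : EReal :=
  ∑ z : S × A × S,
    if ξ' z = 0 then (0 : EReal)
    else if ξ z = 0 then (⊤ : EReal)
    else (((ξ' z * (Real.log (ξ' z / rowXi S A ξ' z.1) -
      Real.log (ξ z / rowXi S A ξ z.1))) : ℝ) : EReal)

/-- Long-run average reward. -/
def V (r : S → A → ℝ) (ξ : S × A × S → ℝ) : ℝ := ∑ z : S × A × S, r z.1 z.2.1 * ξ z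

/-- `ξ` is the stationary state-action-next-state distribution induced by the pair
`(π, Q)` where `Q` is the kernel determined by `ξ0`. -/
def IsShift (π : S → A → ℝ) (ξ0 ξ : S × A × S → ℝ) : Prop :=
  ∃ μ : S × A → ℝ, (∀ x, 0 ≤ μ x) ∧ (∑ x, μ x = 1) ∧
    (∀ x' : S × A, μ x' = ∑ x : S × A, μ x * (π x'.1 x'.2 * QXi S A ξ0 x.1 x.2 x'.1)) ∧
    (∀ s a s', ξ (s, a, s') = QXi S A ξ0 s a s' * μ (s, a))

/-- The distributionally robust value function `V^π_ρ(ξ')`, where `f = f_π` is the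
distribution shift function of the evaluation policy. -/
noncomputable def Vrho (r : S → A → ℝ) (f : (S × A × S → ℝ) → (S × A × S → ℝ)) (ρ : ℝ)
    (ξ' : S × A × S → ℝ) : ℝ :=
  sInf ((fun ξ0 => V S A r (f ξ0)) '' {ξ0 | ξ0 ∈ Xi0Set S A ∧ Dmdp S A ξ' ξ0 ≤ (ρ : EReal)})

end OfflineRL

namespace Matrix

variable {ι R : Type*} [Fintype ι] [Field R]

section Stationary

variable [LinearOrder R] [IsStrictOrderedRing R]

structure IsStationaryDistribution (P : Matrix ι ι R) (μ : ι → R) : Prop where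
  nonneg : ∀ i, 0 ≤ μ i
  sum_eq_one : ∑ i, μ i = 1
  vecMul_eq : μ ᵥ* P = μ

variable {P : Matrix ι ι R}

lemma IsStationaryDistribution.ne_zero {μ : ι → R} (hμ : IsStationaryDistribution P μ) :
    μ ≠ 0 := fun h => by simpa [h] using hμ.sum_eq_one

lemma pos_of_vecMul_eq_of_reflTransGen (hP : ∀ i j, 0 ≤ P i j) {v : ι → R} (hv : ∀ i, 0 ≤ v i)
    (hvP : v ᵥ* P = v) {i j : ι} (hij : Relation.ReflTransGen (fun k l => 0 < P k l) i j)
    (hi : 0 < v i) : 0 < v j := by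
  induction hij with
  | refl => exact hi
  | @tail k l _ hkl hk =>
    calc 0 < v k * P k l := mul_pos hk hkl
      _ ≤ ∑ m, v m * P m l :=
        Finset.single_le_sum (fun m _ => mul_nonneg (hv m) (hP m l)) (Finset.mem_univ k)
      _ = v l := congrFun hvP l

lemma pos_of_vecMul_eq (hP : ∀ i j, 0 ≤ P i j)
    (hconn : ∀ i j, Relation.ReflTransGen (fun k l => 0 < P k l) i j) {v : ι → R}
    (hv : ∀ i, 0 ≤ v i) (hvP : v ᵥ* P = v) (hv0 : v ≠ 0) (j : ι) : 0 < v j := by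
  obtain ⟨i, hi⟩ := Function.ne_iff.1 hv0
  exact pos_of_vecMul_eq_of_reflTransGen hP hv hvP (hconn i j) ((hv i).lt_of_ne' hi)

lemma IsStationaryDistribution.eq_smul_of_vecMul_eq (hP : ∀ i j, 0 ≤ P i j)
    (hconn : ∀ i j, Relation.ReflTransGen (fun k l => 0 < P k l) i j) {μ : ι → R}
    (hμ : IsStationaryDistribution P μ) {w : ι → R} (hwP : w ᵥ* P = w) :
    ∃ c : R, w = c • μ := by
  have hμpos := pos_of_vecMul_eq hP hconn hμ.nonneg hμ.vecMul_eq hμ.ne_zero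
  obtain ⟨i, -⟩ := Function.ne_iff.1 hμ.ne_zero
  obtain ⟨i₀, -, hi₀⟩ :=
    Finset.exists_min_image Finset.univ (fun i => w i / μ i) (Finset.univ_nonempty_iff.2 ⟨i⟩)
  refine ⟨w i₀ / μ i₀, ?_⟩
  -- with `c = min (w / μ)`, `w - c • μ` is a nonnegative fixed vector vanishing at `i₀`
  set v := w - (w i₀ / μ i₀) • μ
  have hv : ∀ i, 0 ≤ v i := fun i => by
    have := (le_div_iff₀ (hμpos i)).1 (hi₀ i (Finset.mem_univ i))
    simp only [v, Pi.sub_apply, Pi.smul_apply, smul_eq_mul]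
    linarith
  have hvP : v ᵥ* P = v := by rw [sub_vecMul, smul_vecMul, hwP, hμ.vecMul_eq]
  have hvi₀ : v i₀ = 0 := by simp [v, div_mul_cancel₀ _ (hμpos i₀).ne']
  by_contra h
  exact (pos_of_vecMul_eq hP hconn hv hvP (sub_ne_zero.2 h) i₀).ne' hvi₀

end Stationary

variable [DecidableEq ι]

lemma vecMul_one_sub_add_ones (P : Matrix ι ι R) (w : ι → R) :
    w ᵥ* (1 - P + of fun _ _ => 1) = w - w ᵥ* P + fun _ => ∑ i, w i := by
  rw [vecMul_add, vecMul_sub, vecMul_one]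
  congr
  funext j
  simp [vecMul, dotProduct]

/-- The stationary distribution of `P` when `P` is stochastic and irreducible
(`1 - P + J` is then invertible); a junk value otherwise. -/
noncomputable def stationaryDistribution (P : Matrix ι ι R) : ι → R :=
  1 ᵥ* (1 - P + of fun _ _ => 1)⁻¹

lemma continuousOn_stationaryDistribution [TopologicalSpace R] [IsTopologicalRing R]
    [ContinuousInv₀ R] {X : Type*} [TopologicalSpace X] {s : Set X}
    {P : X → Matrix ι ι R} (hPc : ContinuousOn P s)
    (hdet : ∀ x ∈ s, (1 - P x + of fun _ _ => 1).det ≠ 0) :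
    ContinuousOn (fun x => stationaryDistribution (P x)) s := by
  have hM : ContinuousOn (fun x => 1 - P x + of fun _ _ => (1 : R)) s :=
    (continuousOn_const.sub hPc).add continuousOn_const
  have hinv : ContinuousOn (fun x => (1 - P x + of fun _ _ => (1 : R))⁻¹) s := fun x hx => by
    refine (continuousAt_matrix_inv _ ?_).comp_continuousWithinAt (hM x hx)
    rw [Ring.inverse_eq_inv']
    exact continuousAt_inv₀ (hdet x hx)
  exact (continuous_const.matrix_vecMul continuous_id).comp_continuousOn hinv

variable [LinearOrder R] [IsStrictOrderedRing R] {P : Matrix ι ι R}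

lemma det_one_sub_add_ones_ne_zero (hP : P ∈ rowStochastic R ι)
    (hconn : ∀ i j, Relation.ReflTransGen (fun k l => 0 < P k l) i j) {μ : ι → R}
    (hμ : IsStationaryDistribution P μ) : (1 - P + of fun _ _ => 1).det ≠ 0 := by
  intro hdet
  obtain ⟨w, hw0, hwM⟩ := exists_vecMul_eq_zero_iff.2 hdet
  rw [vecMul_one_sub_add_ones] at hwM
  have hsum : ∑ i, (w ᵥ* P) i = ∑ i, w i := by
    have := dotProduct_mulVec w P 1
    rw [hP.2] at this
    simpa only [dotProduct_one] using this.symm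
  have hws : ∑ i, w i = 0 := by
    have := congrArg (fun v : ι → R => ∑ i, v i) hwM
    simp only [Pi.add_apply, Pi.sub_apply, Finset.sum_add_distrib, Finset.sum_sub_distrib, hsum,
      sub_self, Finset.sum_const, Finset.card_univ, nsmul_eq_mul, zero_add, Pi.zero_apply,
      mul_zero] at this
    obtain ⟨i, -⟩ := Function.ne_iff.1 hw0
    have hcard : (Fintype.card ι : R) ≠ 0 := by
      have : Nonempty ι := ⟨i⟩
      exact_mod_cast Fintype.card_ne_zero
    exact (mul_eq_zero.1 this).resolve_left hcard
  have hwP : w ᵥ* P = w := by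
    funext i
    have := congrFun hwM i
    simp only [hws, Pi.add_apply, Pi.sub_apply, Pi.zero_apply, add_zero, sub_eq_zero] at this
    exact this.symm
  obtain ⟨c, rfl⟩ := hμ.eq_smul_of_vecMul_eq hP.1 hconn hwP
  simp only [Pi.smul_apply, smul_eq_mul, ← Finset.mul_sum, hμ.sum_eq_one, mul_one] at hws
  exact hw0 (by simp [hws])

lemma IsStationaryDistribution.eq_stationaryDistribution (hP : P ∈ rowStochastic R ι)
    (hconn : ∀ i j, Relation.ReflTransGen (fun k l => 0 < P k l) i j) {μ : ι → R}
    (hμ : IsStationaryDistribution P μ) : μ = stationaryDistribution P := by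
  set M : Matrix ι ι R := 1 - P + of fun _ _ => 1
  have hμM : μ ᵥ* M = 1 := by
    rw [vecMul_one_sub_add_ones, hμ.vecMul_eq, hμ.sum_eq_one, sub_self, zero_add]
    rfl
  calc μ = μ ᵥ* (M * M⁻¹) := by
        rw [mul_nonsing_inv _ (isUnit_iff_ne_zero.2 (det_one_sub_add_ones_ne_zero hP hconn hμ)),
          vecMul_one]
    _ = stationaryDistribution P := by rw [← vecMul_vecMul, hμM]; rfl

end Matrix

namespace OfflineRL

open Matrix

variable {S A : Type*} [Fintype S] [Fintype A]

lemma muXi_pos {ξ : S × A × S → ℝ} (hξ : ξ ∈ Xi0Set S A) (x : S × A) : 0 < muXi S A ξ x := by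
  obtain ⟨⟨hnn, hsum, -⟩, hconn⟩ := hξ
  obtain ⟨⟨s, a, s'⟩, hz⟩ : ∃ z, 0 < ξ z := by
    by_contra! h
    linarith [Finset.sum_nonpos fun z (_ : z ∈ Finset.univ) => h z]
  have hle : ∀ (y : S × A) (t : S), ξ (y.1, y.2, t) ≤ muXi S A ξ y := fun y t =>
    Finset.single_le_sum (f := fun t => ξ (y.1, y.2, t)) (fun t _ => hnn _) (Finset.mem_univ t)
  rcases (hconn x (s, a)).cases_head with rfl | ⟨y, hxy, -⟩
  · exact hz.trans_le (hle (s, a) s')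
  · exact hxy.trans_le (hle x y.1)

lemma sum_QXi {ξ : S × A × S → ℝ} (hξ : ξ ∈ Xi0Set S A) (s : S) (a : A) :
    ∑ s', QXi S A ξ s a s' = 1 := by
  simp only [QXi]
  rw [← Finset.sum_div]
  exact div_self (muXi_pos hξ (s, a)).ne'

lemma continuousOn_QXi (s : S) (a : A) (s' : S) :
    ContinuousOn (fun ξ => QXi S A ξ s a s') (Xi0Set S A) := by
  have hμ : Continuous fun ξ : S × A × S → ℝ => muXi S A ξ (s, a) :=
    continuous_finsetSum _ fun _ _ => continuous_apply _
  exact (continuous_apply _).continuousOn.div hμ.continuousOn fun _ hξ => (muXi_pos hξ (s, a)).ne'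

noncomputable def policyTransition (π : S → A → ℝ) (ξ : S × A × S → ℝ) :
    Matrix (S × A) (S × A) ℝ :=
  of fun x x' => π x'.1 x'.2 * QXi S A ξ x.1 x.2 x'.1

variable {π : S → A → ℝ} {ξ0 : S × A × S → ℝ}

lemma policyTransition_mem_rowStochastic [DecidableEq S] [DecidableEq A]
    (hπ : π ∈ policySet S A) (hξ0 : ξ0 ∈ Xi0Set S A) :
    policyTransition π ξ0 ∈ rowStochastic ℝ (S × A) := by
  refine mem_rowStochastic_iff_sum.2 ⟨fun x x' => mul_nonneg ((hπ x'.1).1 _)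
    (div_nonneg (hξ0.1.1 _) (muXi_pos hξ0 x).le), fun x => ?_⟩
  simp only [policyTransition, of_apply, Fintype.sum_prod_type, ← Finset.sum_mul, (hπ _).2,
    one_mul]
  exact sum_QXi hξ0 x.1 x.2

lemma reflTransGen_policyTransition (hπ : ∀ s a, 0 < π s a) (hξ0 : ξ0 ∈ Xi0Set S A)
    (x y : S × A) : Relation.ReflTransGen (fun u v => 0 < policyTransition π ξ0 u v) x y :=
  Relation.ReflTransGen.mono (fun u _ huv => mul_pos (hπ _ _) (div_pos huv (muXi_pos hξ0 u))) _ _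
    (hξ0.2 x y)

lemma continuousOn_policyTransition (π : S → A → ℝ) :
    ContinuousOn (policyTransition π) (Xi0Set S A) :=
  continuousOn_pi.2 fun x => continuousOn_pi.2 fun x' =>
    continuousOn_const.mul (continuousOn_QXi x.1 x.2 x'.1)

lemma IsShift.exists_isStationaryDistribution {ξ : S × A × S → ℝ} (h : IsShift S A π ξ0 ξ) :
    ∃ μ, IsStationaryDistribution (policyTransition π ξ0) μ ∧
      ∀ s a s', ξ (s, a, s') = QXi S A ξ0 s a s' * μ (s, a) := by
  obtain ⟨μ, hnn, hsum, hstat, hξ⟩ := h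
  exact ⟨μ, ⟨hnn, hsum, funext fun x' => (hstat x').symm⟩, hξ⟩

variable (S A) [DecidableEq S] [DecidableEq A]

/-- **Continuity of the distribution shift function `f_π`** (Lemma 3).
Any function `f` that maps each `ξ0 ∈ Ξ₀` to the stationary state-action-next-state
distribution of the Markov chain induced by `(π, Q(ξ0))` is continuous on `Ξ₀`. -/
theorem distribution_shift_continuous
    (π : S → A → ℝ) (hπ : π ∈ policyPos S A)
    (f : (S × A × S → ℝ) → (S × A × S → ℝ))
    (hf : ∀ ξ0 ∈ Xi0Set S A, f ξ0 ∈ Xi0Set S A ∧ IsShift S A π ξ0 (f ξ0)) :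
    ContinuousOn f (Xi0Set S A) := by
  have hP := fun ξ0 (hξ0 : ξ0 ∈ Xi0Set S A) => policyTransition_mem_rowStochastic hπ.1 hξ0
  have hconn := fun ξ0 (hξ0 : ξ0 ∈ Xi0Set S A) => reflTransGen_policyTransition hπ.2 hξ0
  have hdet : ∀ ξ0 ∈ Xi0Set S A, (1 - policyTransition π ξ0 + of fun _ _ => 1).det ≠ 0 := by
    intro ξ0 hξ0
    obtain ⟨μ, hμ, -⟩ := (hf ξ0 hξ0).2.exists_isStationaryDistribution
    exact det_one_sub_add_ones_ne_zero (hP ξ0 hξ0) (hconn ξ0 hξ0) hμ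
  have hg : ContinuousOn (fun ξ0 (z : S × A × S) => QXi S A ξ0 z.1 z.2.1 z.2.2 *
      stationaryDistribution (policyTransition π ξ0) (z.1, z.2.1)) (Xi0Set S A) :=
    continuousOn_pi.2 fun z => (continuousOn_QXi _ _ _).mul <| (continuous_apply _).comp_continuousOn
      (continuousOn_stationaryDistribution (continuousOn_policyTransition π) hdet)
  refine hg.congr fun ξ0 hξ0 => funext fun ⟨s, a, s'⟩ => ?_
  obtain ⟨μ, hμ, hfμ⟩ := (hf ξ0 hξ0).2.exists_isStationaryDistribution
  rw [hfμ, hμ.eq_stationaryDistribution (hP ξ0 hξ0) (hconn ξ0 hξ0)]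

end OfflineRL
end

section
/- For any fixed π ∈ Π0, ρ ≥ 0, and ξ' ∈ Ξ0, the distributionally robust value function admits the reformulation V^π_ρ(ξ') = min over Q ∈ 𝒬0 satisfying Σ_{x∈𝒮×𝒜} μ'(x)·D(Q'(·|x)‖Q(·|x)) ≤ ρ of Σ_{x∈𝒮×𝒜} r(x)·μ_{π,Q}(x), where Q' is the transition kernel induced by ξ', μ' is the stationary state-action distribution of ξ' (μ'(s,a) = Σ_{s'} ξ'(s,a,s')), D denotes the relative entropy on Δ(𝒮), and μ_{π,Q} is the unique positive solution of Σ_x μ_{π,Q}(x) = 1 and μ_{π,Q}(x) = Σ_y μ_{π,Q}(y)·P(y,x) with P((s,a),(s',a')) = π(a'|s')Q(s'|s,a); moreover this minimum is attained. -/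
open Filter Topology MeasureTheory
open scoped Classical

namespace OfflineRL

variable (S A : Type*) [Fintype S] [Fintype A] [DecidableEq S] [DecidableEq A]

/-- Relative entropy `D(p‖q)` on `Δ(S)`, with the conventions `0·log(0/t) = 0` and
`t·log(t/0) = ∞` for `t > 0`. -/
noncomputable def KLS (p q : S → ℝ) : EReal :=
  ∑ s' : S,
    if p s' = 0 then (0 : EReal)
    else if q s' = 0 then (⊤ : EReal)
    else (((p s' * Real.log (p s' / q s')) : ℝ) : EReal)

/-- `μ` is the unique positive solution of `Σ_x μ(x) = 1` and
`μ(x) = Σ_y μ(y) P(y,x)` with `P((s,a),(s',a')) = π(a'|s')·Q(s'|s,a)`. -/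
def IsStatDist (π : S → A → ℝ) (Q : S → A → S → ℝ) (μ : S × A → ℝ) : Prop :=
  (∀ x, 0 < μ x) ∧ (∑ x, μ x = 1) ∧
    ∀ x' : S × A, μ x' = ∑ x : S × A, μ x * (π x'.1 x'.2 * Q x.1 x.2 x'.1)

/-- The weighted conditional relative entropy constraint defining `𝒬_ρ(ξ')`:
`Σ_x μ'(x) D(Q'(·|x) ‖ Q(·|x)) ≤ ρ`, where `Q'` is the kernel induced by `ξ'` and
`μ'` its stationary state-action distribution. -/
noncomputable def InUncertaintySet (ξ' : S × A × S → ℝ) (ρ : ℝ)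
    (Q : S → A → S → ℝ) : Prop :=
  (∑ x : S × A, ((muXi S A ξ' x : ℝ) : EReal) *
      KLS S (fun s' => QXi S A ξ' x.1 x.2 s') (fun s' => Q x.1 x.2 s')) ≤ (ρ : EReal)

end OfflineRL

/-!
By the chain rule, `D_mdp(ξ' ‖ ξ₀)` is the kernel divergence `Σ_x μ'(x) D(Q'(·|x) ‖ Q₀(·|x))`
plus a nonnegative policy divergence, which vanishes when `ξ₀` has the behavioural policy of `ξ'`.
Hence every feasible `ξ₀` gives a feasible kernel `Q₀ = Q_{ξ₀}` with `V(f_π ξ₀) = Σ r μ_{π,Q₀}`;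
conversely every feasible kernel `Q` is the kernel of a feasible `ξ₀` (built from the stationary
distribution of `Q` under the behavioural policy of `ξ'`), and then `f_π ξ₀` is pinned down by
uniqueness of the stationary distribution of an irreducible chain. So `V^π_ρ(ξ')` is the infimum of
`Σ r μ` over pairs `(Q, μ)` of a feasible kernel and a stationary distribution of its
state-action chain. This set of pairs is compact: `p log (p / q) → ∞` as `q → 0`, so the kernel
divergence is continuous as an `EReal`-valued function and the constraint is closed. Hence the
infimum is attained; a minimizing kernel is positive on the support of `ξ'`, so it is strongly
connected and its stationary distribution is positive.
-/

open Finset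

namespace EReal

theorem coe_finsetSum {ι : Type*} (s : Finset ι) (f : ι → ℝ) :
    ((∑ i ∈ s, f i : ℝ) : EReal) = ∑ i ∈ s, (f i : EReal) :=
  map_sum (⟨⟨Real.toEReal, coe_zero⟩, coe_add⟩ : ℝ →+ EReal) f s

theorem finsetSum_ne_bot {ι : Type*} {s : Finset ι} {f : ι → EReal}
    (h : ∀ i ∈ s, f i ≠ ⊥) : ∑ i ∈ s, f i ≠ ⊥ := by
  induction s using Finset.cons_induction with
  | empty => simp
  | cons a s _ ih =>
    rw [Finset.sum_cons, Ne, add_eq_bot_iff, not_or]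
    exact ⟨h a (mem_cons_self a s), ih fun i hi => h i (mem_cons_of_mem hi)⟩

theorem finsetSum_eq_top {ι : Type*} {s : Finset ι} {f : ι → EReal}
    (h : ∀ i ∈ s, f i ≠ ⊥) {i : ι} (hi : i ∈ s) (hfi : f i = ⊤) : ∑ i ∈ s, f i = ⊤ := by
  classical
  rw [← Finset.add_sum_erase _ _ hi, hfi]
  exact top_add_of_ne_bot (finsetSum_ne_bot fun j hj => h j (mem_of_mem_erase hj))

theorem continuousOn_finsetSum {α ι : Type*} [TopologicalSpace α] {t : Set α} {s : Finset ι}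
    {f : ι → α → EReal} (hf : ∀ i ∈ s, ContinuousOn (f i) t)
    (hbot : ∀ i ∈ s, ∀ a ∈ t, f i a ≠ ⊥) : ContinuousOn (fun a => ∑ i ∈ s, f i a) t := by
  induction s using Finset.cons_induction with
  | empty => simpa using continuousOn_const
  | cons j s _ ih =>
    simp only [Finset.sum_cons]
    intro a ha
    have hs := ih (fun i hi => hf i (mem_cons_of_mem hi))
      (fun i hi => hbot i (mem_cons_of_mem hi))
    exact (continuousAt_add (Or.inr (finsetSum_ne_bot fun i hi => hbot i (mem_cons_of_mem hi) a ha))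
      (Or.inl (hbot j (mem_cons_self j s) a ha))).comp_continuousWithinAt
      ((hf j (mem_cons_self j s) a ha).prodMk (hs a ha))

theorem coe_mul_ne_bot {c : ℝ} (hc : 0 ≤ c) {y : EReal} (hy : y ≠ ⊥) : (c : EReal) * y ≠ ⊥ := by
  rw [Ne, mul_eq_bot]
  rintro (⟨h, -⟩ | ⟨-, h⟩ | ⟨h, -⟩ | ⟨h, -⟩)
  · exact coe_ne_bot _ h
  · exact hy h
  · exact coe_ne_top _ h
  · exact (EReal.coe_nonneg.2 hc).not_gt h

end EReal

section MarkovChain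

variable {X : Type*} [Fintype X] {P : X → X → ℝ}

theorem exists_stationary_of_stochastic [Nonempty X] (hP0 : ∀ x y, 0 ≤ P x y)
    (hP1 : ∀ x, ∑ y, P x y = 1) :
    ∃ μ ∈ stdSimplex ℝ X, ∀ y, μ y = ∑ x, μ x * P x y := by
  classical
  obtain ⟨v, hv0, hv⟩ : ∃ v : X → ℝ, v ≠ 0 ∧ Matrix.vecMul v (Matrix.of P - 1) = 0 := by
    rw [Matrix.exists_vecMul_eq_zero_iff, ← Matrix.exists_mulVec_eq_zero_iff]
    refine ⟨fun _ => 1, fun h => one_ne_zero (congrFun h (Classical.arbitrary X)), ?_⟩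
    rw [Matrix.sub_mulVec, Matrix.one_mulVec, sub_eq_zero]
    ext x
    simp [Matrix.mulVec, dotProduct, hP1]
  have hvP : ∀ y, v y = ∑ x, v x * P x y := fun y => by
    rw [Matrix.vecMul_sub, Matrix.vecMul_one, sub_eq_zero] at hv
    simpa [Matrix.vecMul, dotProduct] using (congrFun hv y).symm
  -- `|v|` is subinvariant, and the total masses agree, so it is invariant.
  have hsub : ∀ y, |v y| ≤ ∑ x, |v x| * P x y := fun y => by
    calc |v y| = |∑ x, v x * P x y| := by rw [← hvP]
    _ ≤ ∑ x, |v x * P x y| := Finset.abs_sum_le_sum_abs _ _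
    _ = ∑ x, |v x| * P x y := by simp_rw [abs_mul, abs_of_nonneg (hP0 _ _)]
  have hmass : ∑ y, ∑ x, |v x| * P x y = ∑ y, |v y| := by
    rw [Finset.sum_comm]
    simp_rw [← Finset.mul_sum, hP1, mul_one]
  have hinv : ∀ y, |v y| = ∑ x, |v x| * P x y := by
    have hzero := (Finset.sum_eq_zero_iff_of_nonneg fun y _ => sub_nonneg.2 (hsub y)).1
      (by rw [Finset.sum_sub_distrib, hmass, sub_self])
    exact fun y => (sub_eq_zero.1 (hzero y (mem_univ y))).symm
  have hc : 0 < ∑ x, |v x| := by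
    obtain ⟨x, hx⟩ := Function.ne_iff.1 hv0
    exact (abs_pos.2 hx).trans_le (single_le_sum (fun i _ => abs_nonneg (v i)) (mem_univ x))
  refine ⟨fun x => |v x| / ∑ x, |v x|,
    ⟨fun x => by positivity, by rw [← Finset.sum_div, div_self hc.ne']⟩, fun y => ?_⟩
  dsimp only
  rw [hinv y, Finset.sum_div]
  exact Finset.sum_congr rfl fun x _ => by ring

theorem pos_of_stationary_of_reflTransGen (hP0 : ∀ x y, 0 ≤ P x y) {μ : X → ℝ}
    (hμ0 : ∀ x, 0 ≤ μ x) (hμ : ∀ y, μ y = ∑ x, μ x * P x y) {x y : X} (hx : 0 < μ x)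
    (hxy : Relation.ReflTransGen (fun u v => 0 < P u v) x y) : 0 < μ y := by
  induction hxy with
  | refl => exact hx
  | @tail b c _ hbc ih =>
    rw [hμ c]
    exact (mul_pos ih hbc).trans_le
      (single_le_sum (fun i _ => mul_nonneg (hμ0 i) (hP0 i c)) (mem_univ b))

theorem pos_of_stationary_of_irreducible (hP0 : ∀ x y, 0 ≤ P x y)
    (hirr : ∀ x y, Relation.ReflTransGen (fun u v => 0 < P u v) x y) {μ : X → ℝ}
    (hμ : μ ∈ stdSimplex ℝ X) (hμst : ∀ y, μ y = ∑ x, μ x * P x y) (y : X) : 0 < μ y := by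
  obtain ⟨x, -, hx⟩ := Finset.exists_lt_of_sum_lt (f := 0) (s := univ) (g := μ)
    (by simp [hμ.2])
  exact pos_of_stationary_of_reflTransGen hP0 hμ.1 hμst hx (hirr x y)

theorem stationary_unique (hP0 : ∀ x y, 0 ≤ P x y)
    (hirr : ∀ x y, Relation.ReflTransGen (fun u v => 0 < P u v) x y) {μ ν : X → ℝ}
    (hμ : μ ∈ stdSimplex ℝ X) (hμst : ∀ y, μ y = ∑ x, μ x * P x y)
    (hν : ν ∈ stdSimplex ℝ X) (hνst : ∀ y, ν y = ∑ x, ν x * P x y) : μ = ν := by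
  have hνpos := pos_of_stationary_of_irreducible hP0 hirr hν hνst
  have hne : (univ : Finset X).Nonempty := by
    by_contra h
    simpa [Finset.not_nonempty_iff_eq_empty.1 h] using hν.2
  -- Subtract from `μ` the largest multiple of `ν` that keeps it nonnegative.
  obtain ⟨x₀, -, hx₀⟩ := Finset.exists_min_image univ (fun x => μ x / ν x) hne
  set c := μ x₀ / ν x₀
  set w : X → ℝ := fun x => μ x - c * ν x
  have hw0 : ∀ x, 0 ≤ w x := fun x => by
    have := hx₀ x (mem_univ x)
    rw [div_le_div_iff₀ (hνpos x₀) (hνpos x)] at this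
    simp only [w, c, sub_nonneg, div_mul_eq_mul_div, div_le_iff₀ (hνpos x₀)]
    linarith
  have hwst : ∀ y, w y = ∑ x, w x * P x y := fun y => by
    simp only [w, sub_mul, Finset.sum_sub_distrib, mul_assoc, ← Finset.mul_sum, ← hμst, ← hνst]
  have hwx₀ : w x₀ = 0 := by simp [w, c, div_mul_cancel₀ _ (hνpos x₀).ne']
  have hw : ∀ x, w x = 0 := fun x => by
    by_contra hx
    have := pos_of_stationary_of_reflTransGen hP0 hw0 hwst
      ((hw0 x).lt_of_ne (Ne.symm hx)) (hirr x x₀)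
    exact this.ne' hwx₀
  have hμν : ∀ x, μ x = c * ν x := fun x => sub_eq_zero.1 (hw x)
  have hc : c = 1 := by
    have := hμ.2
    simp_rw [hμν, ← Finset.mul_sum, hν.2, mul_one] at this
    exact this
  funext x
  rw [hμν x, hc, one_mul]

end MarkovChain

namespace OfflineRL

/-- The summand of `KLS`. -/
noncomputable def klTerm (p q : ℝ) : EReal :=
  if p = 0 then 0 else if q = 0 then ⊤ else ((p * Real.log (p / q) : ℝ) : EReal)

noncomputable def relEntropy {ι : Type*} [Fintype ι] (p q : ι → ℝ) : ℝ :=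
  ∑ i, if p i = 0 then 0 else p i * Real.log (p i / q i)

theorem klTerm_ne_bot (p q : ℝ) : klTerm p q ≠ ⊥ := by
  unfold klTerm
  split_ifs
  · exact EReal.zero_ne_bot
  · exact top_ne_bot
  · exact EReal.coe_ne_bot _

theorem continuousOn_klTerm {p : ℝ} (hp : 0 ≤ p) : ContinuousOn (klTerm p) (Set.Ici 0) := by
  rcases hp.eq_or_lt with rfl | hp
  · have : klTerm 0 = fun _ => 0 := funext fun q => if_pos rfl
    rw [this]
    exact continuousOn_const
  intro q hq
  rcases (Set.mem_Ici.1 hq).eq_or_lt with rfl | hq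
  · rw [← Set.Ioi_insert, continuousWithinAt_insert_self, ContinuousWithinAt,
      show klTerm p 0 = ⊤ by simp [klTerm, hp.ne']]
    have hlim : Tendsto (fun q => p * Real.log (p / q)) (𝓝[>] 0) atTop := by
      refine Tendsto.const_mul_atTop hp (Real.tendsto_log_atTop.comp ?_)
      exact (tendsto_inv_nhdsGT_zero.const_mul_atTop hp).congr fun q => (div_eq_mul_inv p q).symm
    refine (EReal.tendsto_coe_nhds_top_iff.2 hlim).congr' ?_
    filter_upwards [self_mem_nhdsWithin] with q hq
    simp [klTerm, hp.ne', (Set.mem_Ioi.1 hq).ne']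
  · have : klTerm p =ᶠ[𝓝 q] fun q => ((p * Real.log (p / q) : ℝ) : EReal) := by
      filter_upwards [eventually_ne_nhds hq.ne'] with q hq
      simp [klTerm, hp.ne', hq]
    refine (ContinuousAt.congr ?_ this.symm).continuousWithinAt
    exact continuous_coe_real_ereal.continuousAt.comp
      (continuousAt_const.mul ((Real.continuousAt_log (div_pos hp hq).ne').comp
        (continuousAt_const.div continuousAt_id hq.ne')))

theorem relEntropy_self {ι : Type*} [Fintype ι] (p : ι → ℝ) : relEntropy p p = 0 :=
  Finset.sum_eq_zero fun i _ => by
    split_ifs with h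
    · rfl
    · rw [div_self h, Real.log_one, mul_zero]

theorem relEntropy_nonneg {ι : Type*} [Fintype ι] {p q : ι → ℝ} (hp : ∀ i, 0 ≤ p i)
    (hq : ∀ i, 0 < q i) (hsum : ∑ i, q i ≤ ∑ i, p i) : 0 ≤ relEntropy p q := by
  have hterm : ∀ i, p i - q i ≤ if p i = 0 then 0 else p i * Real.log (p i / q i) := fun i => by
    split_ifs with h
    · linarith [hq i]
    · have hpi : 0 < p i := (hp i).lt_of_ne' h
      have := Real.one_sub_inv_le_log_of_pos (div_pos hpi (hq i))
      rw [inv_div] at this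
      have := mul_le_mul_of_nonneg_left this hpi.le
      rwa [mul_sub, mul_one, mul_div_cancel₀ _ hpi.ne'] at this
  calc 0 ≤ ∑ i, (p i - q i) := by rw [Finset.sum_sub_distrib]; linarith
    _ ≤ relEntropy p q := Finset.sum_le_sum fun i _ => hterm i

section
variable {S A : Type*}

def saChain (π : S → A → ℝ) (Q : S → A → S → ℝ) (x y : S × A) : ℝ := π y.1 y.2 * Q x.1 x.2 y.1

def jointXi (ν : S × A → ℝ) (Q : S → A → S → ℝ) (z : S × A × S) : ℝ :=
  ν (z.1, z.2.1) * Q z.1 z.2.1 z.2.2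

theorem saChain_irreducible {π : S → A → ℝ} {Q : S → A → S → ℝ} (hπ : ∀ s a, 0 < π s a)
    (hQ : ∀ x y : S × A, Relation.ReflTransGen (fun u v : S × A => 0 < Q u.1 u.2 v.1) x y)
    (x y : S × A) : Relation.ReflTransGen (fun u v => 0 < saChain π Q u v) x y :=
  Relation.ReflTransGen.mono (fun _ v h => mul_pos (hπ v.1 v.2) h) _ _ (hQ x y)

end

section
variable {S A : Type*} [Fintype S] {ξ ξ' : S × A × S → ℝ} {Q : S → A → S → ℝ}

theorem KLS_eq_coe {p q : S → ℝ} (h : ∀ s, p s ≠ 0 → q s ≠ 0) :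
    KLS S p q = (relEntropy p q : EReal) := by
  rw [KLS, relEntropy, EReal.coe_finsetSum]
  refine Finset.sum_congr rfl fun s _ => ?_
  by_cases hp : p s = 0
  · simp [hp]
  · rw [if_neg hp, if_neg (h s hp), if_neg hp]

theorem KLS_eq_top {p q : S → ℝ} {s : S} (hp : p s ≠ 0) (hq : q s = 0) : KLS S p q = ⊤ :=
  EReal.finsetSum_eq_top (fun s _ => klTerm_ne_bot (p s) (q s)) (mem_univ s)
    (by rw [if_neg hp, if_pos hq])

theorem isCompact_kernelSet : IsCompact (kernelSet S A) := by
  have : kernelSet S A = Set.univ.pi fun _ => Set.univ.pi fun _ => stdSimplex ℝ S := by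
    ext Q
    simp [kernelSet, stdSimplex]
  rw [this]
  exact isCompact_univ_pi fun _ => isCompact_univ_pi fun _ => isCompact_stdSimplex ℝ S

theorem muXi_nonneg (h0 : ∀ z, 0 ≤ ξ z) (x : S × A) : 0 ≤ muXi S A ξ x :=
  Finset.sum_nonneg fun _ _ => h0 _

theorem le_muXi (h0 : ∀ z, 0 ≤ ξ z) (s : S) (a : A) (s' : S) :
    ξ (s, a, s') ≤ muXi S A ξ (s, a) :=
  single_le_sum (f := fun t => ξ (s, a, t)) (fun _ _ => h0 _) (mem_univ s')

theorem muXi_pos_of_support (h0 : ∀ z, 0 ≤ ξ z) (hsupp : ∀ z, 0 < ξ' z → 0 < ξ z)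
    {x : S × A} (hx : 0 < muXi S A ξ' x) : 0 < muXi S A ξ x := by
  obtain ⟨s', -, hs'⟩ := Finset.exists_lt_of_sum_lt (f := 0) (s := univ)
    (g := fun s' => ξ' (x.1, x.2, s')) (by simpa [muXi] using hx)
  exact (hsupp _ hs').trans_le (le_muXi h0 _ _ _)

theorem QXi_pos_iff {s : S} {a : A} (hμ : 0 < muXi S A ξ (s, a)) (s' : S) :
    0 < QXi S A ξ s a s' ↔ 0 < ξ (s, a, s') :=
  div_pos_iff_of_pos_right hμ

theorem QXi_eq_zero_iff {s : S} {a : A} (hμ : 0 < muXi S A ξ (s, a)) (s' : S) :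
    QXi S A ξ s a s' = 0 ↔ ξ (s, a, s') = 0 :=
  div_eq_zero_iff.trans (or_iff_left hμ.ne')

theorem QXi_mem_kernelSet (h0 : ∀ z, 0 ≤ ξ z) (hμ : ∀ x, 0 < muXi S A ξ x) :
    QXi S A ξ ∈ kernelSet S A := fun s a =>
  ⟨fun s' => div_nonneg (h0 _) (hμ _).le, by
    simp only [QXi]
    rw [← Finset.sum_div]
    exact div_self (hμ (s, a)).ne'⟩

theorem muXi_jointXi {ν : S × A → ℝ} (hQ : Q ∈ kernelSet S A) (x : S × A) :
    muXi S A (jointXi ν Q) x = ν x := by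
  simp only [muXi, jointXi]
  rw [← Finset.mul_sum, (hQ _ _).2, mul_one]

theorem QXi_jointXi {ν : S × A → ℝ} (hQ : Q ∈ kernelSet S A) (hν : ∀ x, ν x ≠ 0) :
    QXi S A (jointXi ν Q) = Q := by
  funext s a s'
  rw [QXi, muXi_jointXi hQ, jointXi, mul_div_cancel_left₀ _ (hν _)]

end

section
variable {S A : Type*} [Fintype S] [Fintype A] {ξ ξ' ζ : S × A × S → ℝ}
  {π : S → A → ℝ} {Q : S → A → S → ℝ} {ν : S × A → ℝ}

theorem sum_prod_assoc (g : S × A × S → ℝ) :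
    ∑ z, g z = ∑ x : S × A, ∑ s', g (x.1, x.2, s') := by
  rw [← (Equiv.prodAssoc S A S).sum_comp, Fintype.sum_prod_type]
  rfl

theorem exists_pos_of_mem_XiSet (hξ : ξ ∈ XiSet S A) : ∃ z, 0 < ξ z := by
  obtain ⟨z, -, hz⟩ := Finset.exists_lt_of_sum_lt (f := 0) (s := univ) (g := ξ)
    (by simp [hξ.2.1])
  exact ⟨z, hz⟩

theorem muXi_pos_of_mem_Xi0Set (hξ : ξ ∈ Xi0Set S A) (x : S × A) : 0 < muXi S A ξ x := by
  obtain ⟨z, hz⟩ := exists_pos_of_mem_XiSet hξ.1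
  -- `x` reaches the origin of the edge `z`, so either it is that origin or it has an out-edge
  rcases Relation.ReflTransGen.cases_head (hξ.2 x (z.1, z.2.1)) with rfl | ⟨y, hxy, -⟩
  · exact hz.trans_le (le_muXi hξ.1.1 _ _ _)
  · exact hxy.trans_le (le_muXi hξ.1.1 _ _ _)

theorem muXi_le_rowXi (h0 : ∀ z, 0 ≤ ξ z) (s : S) (a : A) :
    muXi S A ξ (s, a) ≤ rowXi S A ξ s :=
  single_le_sum (f := fun a => muXi S A ξ (s, a)) (fun _ _ => muXi_nonneg h0 _) (mem_univ a)

theorem piXi_pos (h0 : ∀ z, 0 ≤ ξ z) {s : S} {a : A} (hμ : 0 < muXi S A ξ (s, a)) :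
    0 < piXi S A ξ s a :=
  div_pos hμ (hμ.trans_le (muXi_le_rowXi h0 s a))

theorem piXi_mem_policySet [Nonempty A] (h0 : ∀ z, 0 ≤ ξ z) (hμ : ∀ x, 0 < muXi S A ξ x) :
    piXi S A ξ ∈ policySet S A := fun s =>
  ⟨fun a => (piXi_pos h0 (hμ _)).le, by
    have a := Classical.arbitrary A
    simp only [piXi]
    rw [← Finset.sum_div]
    exact div_self ((hμ (s, a)).trans_le (muXi_le_rowXi h0 s a)).ne'⟩

theorem piXi_mul_QXi {s : S} {a : A} (hμ : 0 < muXi S A ξ (s, a)) (s' : S) :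
    piXi S A ξ s a * QXi S A ξ s a s' = ξ (s, a, s') / rowXi S A ξ s := by
  rw [piXi, QXi, rowXi, div_mul_div_comm, mul_comm, mul_div_mul_right _ _ hμ.ne']
  rfl

theorem neg_sum_abs_le_V (r : S → A → ℝ) (hξ : ξ ∈ XiSet S A) :
    -∑ z : S × A × S, |r z.1 z.2.1| ≤ V S A r ξ := by
  rw [V, ← Finset.sum_neg_distrib]
  refine Finset.sum_le_sum fun z _ => ?_
  have h1 : ξ z ≤ 1 := hξ.2.1 ▸ single_le_sum (fun w _ => hξ.1 w) (mem_univ z)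
  nlinarith [abs_nonneg (r z.1 z.2.1), neg_abs_le (r z.1 z.2.1), hξ.1 z,
    mul_le_mul_of_nonneg_left h1 (abs_nonneg (r z.1 z.2.1))]

noncomputable def kernelKL (ξ' : S × A × S → ℝ) (Q : S → A → S → ℝ) : EReal :=
  ∑ x : S × A, ((muXi S A ξ' x : ℝ) : EReal) *
    KLS S (fun s' => QXi S A ξ' x.1 x.2 s') (fun s' => Q x.1 x.2 s')

theorem inUncertaintySet_iff {ρ : ℝ} : InUncertaintySet S A ξ' ρ Q ↔ kernelKL ξ' Q ≤ ρ :=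
  Iff.rfl

theorem kernelKL_eq_coe (h : ∀ s a s', QXi S A ξ' s a s' ≠ 0 → Q s a s' ≠ 0) :
    kernelKL ξ' Q =
      ((∑ x : S × A, muXi S A ξ' x * relEntropy (QXi S A ξ' x.1 x.2) (Q x.1 x.2) : ℝ) : EReal) := by
  rw [kernelKL, EReal.coe_finsetSum]
  exact Finset.sum_congr rfl fun x _ => by rw [KLS_eq_coe (h x.1 x.2), EReal.coe_mul]

theorem continuousOn_kernelKL (h0 : ∀ z, 0 ≤ ξ' z) :
    ContinuousOn (kernelKL ξ') (kernelSet S A) := by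
  refine EReal.continuousOn_finsetSum (fun x _ Q hQ => ?_) (fun x _ Q _ =>
    EReal.coe_mul_ne_bot (muXi_nonneg h0 x) (EReal.finsetSum_ne_bot fun _ _ => klTerm_ne_bot _ _))
  refine EReal.Tendsto.const_mul ?_ (Or.inl (EReal.coe_ne_bot _)) (Or.inl (EReal.coe_ne_top _))
  refine EReal.continuousOn_finsetSum (fun s' _ => ?_) (fun s' _ Q _ => klTerm_ne_bot _ _) Q hQ
  exact (continuousOn_klTerm (div_nonneg (h0 _) (muXi_nonneg h0 _))).comp (by fun_prop)
    fun Q hQ => (hQ x.1 x.2).1 s'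

theorem pos_of_inUncertaintySet (hξ' : ξ' ∈ Xi0Set S A) {ρ : ℝ} (hQ : Q ∈ kernelSet S A)
    (hunc : InUncertaintySet S A ξ' ρ Q) {s : S} {a : A} {s' : S} (hpos : 0 < ξ' (s, a, s')) :
    0 < Q s a s' := by
  refine ((hQ s a).1 s').lt_of_ne' fun hzero => ?_
  have hμ := muXi_pos_of_mem_Xi0Set hξ' (s, a)
  have hKL : KLS S (fun t => QXi S A ξ' s a t) (fun t => Q s a t) = ⊤ :=
    KLS_eq_top ((QXi_pos_iff hμ s').2 hpos).ne' hzero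
  have htop : kernelKL ξ' Q = ⊤ :=
    EReal.finsetSum_eq_top (fun x _ => EReal.coe_mul_ne_bot (muXi_nonneg hξ'.1.1 x)
      (EReal.finsetSum_ne_bot fun _ _ => klTerm_ne_bot _ _)) (mem_univ (s, a))
      (by rw [hKL]; exact EReal.mul_top_of_pos (EReal.coe_pos.2 hμ))
  rw [inUncertaintySet_iff, htop, top_le_iff] at hunc
  exact EReal.coe_ne_top ρ hunc

theorem mem_kernel0_of_inUncertaintySet (hξ' : ξ' ∈ Xi0Set S A) {ρ : ℝ}
    (hQ : Q ∈ kernelSet S A) (hunc : InUncertaintySet S A ξ' ρ Q) : Q ∈ kernel0 S A :=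
  ⟨hQ, fun x y => Relation.ReflTransGen.mono (fun _ _ => pos_of_inUncertaintySet hξ' hQ hunc)
    _ _ (hξ'.2 x y)⟩

theorem Dmdp_self (ξ : S × A × S → ℝ) : Dmdp S A ξ ξ = 0 :=
  Finset.sum_eq_zero fun z _ => by
    split_ifs
    · rfl
    · rw [sub_self, mul_zero, EReal.coe_zero]

theorem Dmdp_eq_top {z : S × A × S} (h' : ξ' z ≠ 0) (h : ξ z = 0) : Dmdp S A ξ' ξ = ⊤ := by
  refine EReal.finsetSum_eq_top (fun z _ => ?_) (mem_univ z) (by rw [if_neg h', if_pos h])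
  split_ifs
  · exact EReal.zero_ne_bot
  · exact top_ne_bot
  · exact EReal.coe_ne_bot _

theorem Dmdp_eq_coe (hsupp : ∀ z, ξ' z ≠ 0 → ξ z ≠ 0) :
    Dmdp S A ξ' ξ = ((∑ z, if ξ' z = 0 then 0 else ξ' z *
      (Real.log (ξ' z / rowXi S A ξ' z.1) - Real.log (ξ z / rowXi S A ξ z.1)) : ℝ) : EReal) := by
  rw [Dmdp, EReal.coe_finsetSum]
  refine Finset.sum_congr rfl fun z _ => ?_
  by_cases h : ξ' z = 0
  · simp [h]
  · rw [if_neg h, if_neg (hsupp z h), if_neg h]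

theorem sum_rowXi_mul_relEntropy_piXi (h0 : ∀ z, 0 ≤ ξ' z) (hμ : ∀ x, 0 < muXi S A ξ' x)
    (q : S → A → ℝ) : ∑ s, rowXi S A ξ' s * relEntropy (piXi S A ξ' s) (q s) =
      ∑ z, ξ' z * Real.log (piXi S A ξ' z.1 z.2.1 / q z.1 z.2.1) := by
  have hterm : ∀ s a, rowXi S A ξ' s * (if piXi S A ξ' s a = 0 then 0
      else piXi S A ξ' s a * Real.log (piXi S A ξ' s a / q s a)) =
        muXi S A ξ' (s, a) * Real.log (piXi S A ξ' s a / q s a) := fun s a => by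
    rw [if_neg (piXi_pos h0 (hμ (s, a))).ne', ← mul_assoc]
    congr 1
    exact mul_div_cancel₀ _ ((hμ (s, a)).trans_le (muXi_le_rowXi h0 s a)).ne'
  simp only [relEntropy, Finset.mul_sum, hterm]
  rw [sum_prod_assoc, Fintype.sum_prod_type]
  exact Finset.sum_congr rfl fun s _ => Finset.sum_congr rfl fun a _ => by
    rw [muXi, Finset.sum_mul]

theorem sum_muXi_mul_relEntropy_QXi (hμ : ∀ x, 0 < muXi S A ξ' x) (q : S → A → S → ℝ) :
    ∑ x : S × A, muXi S A ξ' x * relEntropy (QXi S A ξ' x.1 x.2) (q x.1 x.2) =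
      ∑ z, if ξ' z = 0 then 0
        else ξ' z * Real.log (QXi S A ξ' z.1 z.2.1 z.2.2 / q z.1 z.2.1 z.2.2) := by
  rw [sum_prod_assoc]
  refine Finset.sum_congr rfl fun x _ => ?_
  rw [relEntropy, Finset.mul_sum]
  refine Finset.sum_congr rfl fun s' _ => ?_
  by_cases h : ξ' (x.1, x.2, s') = 0
  · rw [if_pos ((QXi_eq_zero_iff (hμ x) s').2 h), if_pos h, mul_zero]
  · rw [if_neg (mt (QXi_eq_zero_iff (hμ x) s').1 h), if_neg h, QXi, ← mul_assoc,
      mul_div_cancel₀ _ (hμ x).ne']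

theorem Dmdp_eq (hξ' : ξ' ∈ Xi0Set S A) (h0 : ∀ z, 0 ≤ ξ z) (hsupp : ∀ z, 0 < ξ' z → 0 < ξ z) :
    Dmdp S A ξ' ξ =
      ((∑ s, rowXi S A ξ' s * relEntropy (piXi S A ξ' s) (piXi S A ξ s) : ℝ) : EReal) +
        kernelKL ξ' (QXi S A ξ) := by
  have h0' := hξ'.1.1
  have hμ' := muXi_pos_of_mem_Xi0Set hξ'
  have hμ : ∀ x, 0 < muXi S A ξ x := fun x => muXi_pos_of_support h0 hsupp (hμ' x)
  have hpos : ∀ z, ξ' z ≠ 0 → 0 < ξ' z := fun z hz => (h0' z).lt_of_ne' hz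
  have hsuppQ : ∀ s a s', QXi S A ξ' s a s' ≠ 0 → QXi S A ξ s a s' ≠ 0 := fun s a s' h =>
    ((QXi_pos_iff (hμ (s, a)) s').2 (hsupp _ ((QXi_pos_iff (hμ' (s, a)) s').1
      ((div_nonneg (h0' _) (hμ' _).le).lt_of_ne' h)))).ne'
  rw [kernelKL_eq_coe hsuppQ, ← EReal.coe_add, Dmdp_eq_coe fun z hz => (hsupp z (hpos z hz)).ne',
    EReal.coe_eq_coe_iff, sum_rowXi_mul_relEntropy_piXi h0' hμ', sum_muXi_mul_relEntropy_QXi hμ',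
    ← Finset.sum_add_distrib]
  refine Finset.sum_congr rfl fun ⟨s, a, s'⟩ _ => ?_
  dsimp only
  split_ifs with hz
  · rw [hz, zero_mul, add_zero]
  -- on the support, `ξ(s,a,s') / ξ(s) = π_ξ(a|s) Q_ξ(s'|s,a)` for both `ξ'` and `ξ`
  have hQ' := (QXi_pos_iff (hμ' (s, a)) s').2 (hpos _ hz)
  have hQ := (QXi_pos_iff (hμ (s, a)) s').2 (hsupp _ (hpos _ hz))
  have hπ' := piXi_pos h0' (hμ' (s, a))
  have hπ := piXi_pos h0 (hμ (s, a))
  rw [← piXi_mul_QXi (hμ' (s, a)), ← piXi_mul_QXi (hμ (s, a)),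
    Real.log_mul hπ'.ne' hQ'.ne', Real.log_mul hπ.ne' hQ.ne', Real.log_div hπ'.ne' hπ.ne',
    Real.log_div hQ'.ne' hQ.ne']
  ring

theorem kernelKL_QXi_le_Dmdp (hξ' : ξ' ∈ Xi0Set S A) (h0 : ∀ z, 0 ≤ ξ z) :
    kernelKL ξ' (QXi S A ξ) ≤ Dmdp S A ξ' ξ := by
  by_cases hsupp : ∀ z, 0 < ξ' z → 0 < ξ z
  · obtain ⟨z, -⟩ := exists_pos_of_mem_XiSet hξ'.1
    have : Nonempty A := ⟨z.2.1⟩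
    have hμ' := muXi_pos_of_mem_Xi0Set hξ'
    have hμ : ∀ x, 0 < muXi S A ξ x := fun x => muXi_pos_of_support h0 hsupp (hμ' x)
    rw [Dmdp_eq hξ' h0 hsupp]
    refine le_add_of_nonneg_left (EReal.coe_nonneg.2 (Finset.sum_nonneg fun s _ => ?_))
    refine mul_nonneg ((hμ' (s, z.2.1)).le.trans (muXi_le_rowXi hξ'.1.1 _ _))
      (relEntropy_nonneg (fun a => (piXi_pos hξ'.1.1 (hμ' (s, a))).le)
        (fun a => piXi_pos h0 (hμ (s, a))) ?_)
    rw [((piXi_mem_policySet h0 hμ) s).2, ((piXi_mem_policySet hξ'.1.1 hμ') s).2]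
  · push Not at hsupp
    obtain ⟨z, hz', hz⟩ := hsupp
    rw [Dmdp_eq_top hz'.ne' (hz.antisymm (h0 z))]
    exact le_top

theorem Dmdp_eq_kernelKL (hξ' : ξ' ∈ Xi0Set S A) (h0 : ∀ z, 0 ≤ ξ z)
    (hsupp : ∀ z, 0 < ξ' z → 0 < ξ z) (hπ : piXi S A ξ = piXi S A ξ') :
    Dmdp S A ξ' ξ = kernelKL ξ' (QXi S A ξ) := by
  simp [Dmdp_eq hξ' h0 hsupp, hπ, relEntropy_self]

theorem saChain_nonneg (hπ : π ∈ policySet S A) (hQ : Q ∈ kernelSet S A) (x y : S × A) :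
    0 ≤ saChain π Q x y :=
  mul_nonneg ((hπ y.1).1 y.2) ((hQ x.1 x.2).1 y.1)

theorem sum_saChain (hπ : π ∈ policySet S A) (hQ : Q ∈ kernelSet S A) (x : S × A) :
    ∑ y, saChain π Q x y = 1 := by
  simp only [saChain, Fintype.sum_prod_type, ← Finset.sum_mul, (hπ _).2, one_mul, (hQ _ _).2]

theorem V_jointXi (hQ : Q ∈ kernelSet S A) (r : S → A → ℝ) :
    V S A r (jointXi ν Q) = ∑ x : S × A, r x.1 x.2 * ν x := by
  rw [V, sum_prod_assoc]
  refine Finset.sum_congr rfl fun x _ => ?_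
  rw [← muXi_jointXi (ν := ν) hQ x, muXi, Finset.mul_sum]

theorem sum_stationary (hπ : π ∈ policySet S A) (hν : ∀ y, ν y = ∑ x, ν x * saChain π Q x y)
    (s : S) : ∑ a, ν (s, a) = ∑ x, ν x * Q x.1 x.2 s := by
  simp only [hν (s, _), saChain, mul_left_comm _ (π _ _), ← Finset.mul_sum, ← Finset.sum_mul,
    (hπ s).2, one_mul]

theorem piXi_jointXi (hπ : π ∈ policySet S A) (hQ : Q ∈ kernelSet S A) (hνpos : ∀ x, 0 < ν x)
    (hν : ∀ y, ν y = ∑ x, ν x * saChain π Q x y) : piXi S A (jointXi ν Q) = π := by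
  funext s a
  have hflow : ∑ x, ν x * Q x.1 x.2 s ≠ 0 := by
    rw [← sum_stationary hπ hν]
    exact (Finset.sum_pos (fun a _ => hνpos (s, a)) ⟨a, mem_univ a⟩).ne'
  simp only [piXi, muXi_jointXi hQ]
  rw [sum_stationary hπ hν, hν (s, a)]
  simp only [saChain, mul_left_comm _ (π _ _), ← Finset.mul_sum]
  exact mul_div_cancel_right₀ _ hflow

theorem jointXi_mem_XiSet (hπ : π ∈ policySet S A) (hQ : Q ∈ kernelSet S A)
    (hν0 : ν ∈ stdSimplex ℝ (S × A)) (hν : ∀ y, ν y = ∑ x, ν x * saChain π Q x y) :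
    jointXi ν Q ∈ XiSet S A := by
  refine ⟨fun z => mul_nonneg (hν0.1 _) ((hQ _ _).1 _), ?_, fun s => ?_⟩
  · rw [sum_prod_assoc]
    exact (Finset.sum_congr rfl fun x _ => muXi_jointXi hQ x).trans hν0.2
  · calc ∑ s', ∑ a, jointXi ν Q (s, a, s') = ∑ a, ν (s, a) := by
          rw [Finset.sum_comm]
          exact Finset.sum_congr rfl fun a _ => muXi_jointXi hQ (s, a)
      _ = ∑ x : S × A, ν x * Q x.1 x.2 s := sum_stationary hπ hν s
      _ = ∑ s', ∑ a, jointXi ν Q (s', a, s) := Fintype.sum_prod_type _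

theorem IsShift.exists_stationary (hζ : IsShift S A π ξ ζ) (hQ : QXi S A ξ ∈ kernelSet S A)
    (r : S → A → ℝ) : ∃ μ ∈ stdSimplex ℝ (S × A),
      (∀ y, μ y = ∑ x, μ x * saChain π (QXi S A ξ) x y) ∧
        V S A r ζ = ∑ x : S × A, r x.1 x.2 * μ x := by
  obtain ⟨μ, hμ0, hμ1, hμ, hζμ⟩ := hζ
  have : ζ = jointXi μ (QXi S A ξ) := funext fun ⟨s, a, s'⟩ => by rw [hζμ, jointXi, mul_comm]
  exact ⟨μ, ⟨hμ0, hμ1⟩, hμ, by rw [this, V_jointXi hQ]⟩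

def feasibleKernels (ξ' : S × A × S → ℝ) (ρ : ℝ) : Set (S → A → S → ℝ) :=
  {Q | Q ∈ kernelSet S A ∧ InUncertaintySet S A ξ' ρ Q}

-- `μ_{π,Q}` is not obviously continuous in `Q`, so the minimization runs over pairs `(Q, μ)`.
def feasiblePairs (π : S → A → ℝ) (ξ' : S × A × S → ℝ) (ρ : ℝ) :
    Set ((S → A → S → ℝ) × (S × A → ℝ)) :=
  feasibleKernels ξ' ρ ×ˢ stdSimplex ℝ (S × A) ∩ {p | ∀ y, p.2 y = ∑ x, p.2 x * saChain π p.1 x y}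

theorem isCompact_feasibleKernels (h0 : ∀ z, 0 ≤ ξ' z) (ρ : ℝ) :
    IsCompact (feasibleKernels ξ' ρ) :=
  isCompact_kernelSet.of_isClosed_subset ((continuousOn_kernelKL h0).preimage_isClosed_of_isClosed
    isCompact_kernelSet.isClosed isClosed_Iic) fun _ hQ => hQ.1

theorem isCompact_feasiblePairs (h0 : ∀ z, 0 ≤ ξ' z) (ρ : ℝ) :
    IsCompact (feasiblePairs π ξ' ρ) := by
  refine ((isCompact_feasibleKernels h0 ρ).prod (isCompact_stdSimplex ℝ _)).inter_right ?_
  simp only [Set.ofPred_forall, saChain]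
  exact isClosed_iInter fun y => isClosed_eq (by fun_prop) (by fun_prop)

theorem exists_mem_feasiblePairs_of_Dmdp_le (hξ' : ξ' ∈ Xi0Set S A) (hξ : ξ ∈ Xi0Set S A)
    {ρ : ℝ} (hD : Dmdp S A ξ' ξ ≤ ρ) (hζ : IsShift S A π ξ ζ) (r : S → A → ℝ) :
    ∃ p ∈ feasiblePairs π ξ' ρ, V S A r ζ = ∑ x : S × A, r x.1 x.2 * p.2 x := by
  have hQ := QXi_mem_kernelSet hξ.1.1 (muXi_pos_of_mem_Xi0Set hξ)
  obtain ⟨μ, hμ, hμst, hV⟩ := hζ.exists_stationary hQ r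
  exact ⟨(QXi S A ξ, μ), ⟨⟨⟨hQ, (kernelKL_QXi_le_Dmdp hξ' hξ.1.1).trans hD⟩, hμ⟩, hμst⟩, hV⟩

/-- Take the stationary distribution of the state-action chain of `Q` under the behavioural policy
of `ξ'`; then the policy part of `D_mdp` vanishes. -/
theorem exists_Xi0Set_of_mem_feasibleKernels (hξ' : ξ' ∈ Xi0Set S A) {ρ : ℝ}
    (hQ : Q ∈ feasibleKernels ξ' ρ) : ∃ ξ ∈ Xi0Set S A, Dmdp S A ξ' ξ ≤ ρ ∧ QXi S A ξ = Q := by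
  obtain ⟨z, -⟩ := exists_pos_of_mem_XiSet hξ'.1
  have : Nonempty A := ⟨z.2.1⟩
  have : Nonempty (S × A) := ⟨(z.1, z.2.1)⟩
  have hμ' := muXi_pos_of_mem_Xi0Set hξ'
  have hπ' := piXi_mem_policySet hξ'.1.1 hμ'
  obtain ⟨ν, hν, hνst⟩ :=
    exists_stationary_of_stochastic (saChain_nonneg hπ' hQ.1) (sum_saChain hπ' hQ.1)
  have hνpos := pos_of_stationary_of_irreducible (saChain_nonneg hπ' hQ.1)
    (saChain_irreducible (fun s a => piXi_pos hξ'.1.1 (hμ' (s, a)))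
      (mem_kernel0_of_inUncertaintySet hξ' hQ.1 hQ.2).2) hν hνst
  have hsupp : ∀ z, 0 < ξ' z → 0 < jointXi ν Q z := fun z hz =>
    mul_pos (hνpos _) (pos_of_inUncertaintySet hξ' hQ.1 hQ.2 hz)
  have hξ := jointXi_mem_XiSet hπ' hQ.1 hν hνst
  have hQξ := QXi_jointXi hQ.1 fun x => (hνpos x).ne'
  refine ⟨jointXi ν Q, ⟨hξ, fun x y => Relation.ReflTransGen.mono (fun _ _ => hsupp _) _ _
    (hξ'.2 x y)⟩, ?_, hQξ⟩
  rw [Dmdp_eq_kernelKL hξ' hξ.1 hsupp (piXi_jointXi hπ' hQ.1 hνpos hνst), hQξ]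
  exact hQ.2

theorem Vrho_le_of_mem_feasiblePairs (hπ : π ∈ policyPos S A) (hξ' : ξ' ∈ Xi0Set S A)
    {f : (S × A × S → ℝ) → (S × A × S → ℝ)}
    (hf : ∀ ζ0 ∈ Xi0Set S A, f ζ0 ∈ Xi0Set S A ∧ IsShift S A π ζ0 (f ζ0)) {ρ : ℝ}
    {p : (S → A → S → ℝ) × (S × A → ℝ)} (hp : p ∈ feasiblePairs π ξ' ρ) (r : S → A → ℝ) :
    Vrho S A r f ρ ξ' ≤ ∑ x : S × A, r x.1 x.2 * p.2 x := by
  obtain ⟨⟨hQ, hμ⟩, hμst⟩ := hp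
  obtain ⟨ξ, hξ, hD, hQξ⟩ := exists_Xi0Set_of_mem_feasibleKernels hξ' hQ
  obtain ⟨μ, hμ', hμst', hV⟩ := (hf ξ hξ).2.exists_stationary (hQξ ▸ hQ.1) r
  rw [hQξ] at hμst'
  have hirr := saChain_irreducible hπ.2 (mem_kernel0_of_inUncertaintySet hξ' hQ.1 hQ.2).2
  rw [← stationary_unique (saChain_nonneg hπ.1 hQ.1) hirr hμ' hμst' hμ hμst, ← hV]
  refine csInf_le ⟨-∑ z : S × A × S, |r z.1 z.2.1|, ?_⟩ ⟨ξ, ⟨hξ, hD⟩, rfl⟩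
  rintro _ ⟨ξ0, ⟨hξ0, -⟩, rfl⟩
  exact neg_sum_abs_le_V r (hf ξ0 hξ0).1.1

theorem le_Vrho_of_forall_feasiblePairs (hξ' : ξ' ∈ Xi0Set S A)
    {f : (S × A × S → ℝ) → (S × A × S → ℝ)}
    (hf : ∀ ζ0 ∈ Xi0Set S A, f ζ0 ∈ Xi0Set S A ∧ IsShift S A π ζ0 (f ζ0)) {ρ : ℝ} (hρ : 0 ≤ ρ)
    {r : S → A → ℝ} {c : ℝ} (hc : ∀ p ∈ feasiblePairs π ξ' ρ, c ≤ ∑ x : S × A, r x.1 x.2 * p.2 x) :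
    c ≤ Vrho S A r f ρ ξ' := by
  have hD' : Dmdp S A ξ' ξ' ≤ ρ := by rw [Dmdp_self]; exact EReal.coe_nonneg.2 hρ
  refine le_csInf ⟨_, ξ', ⟨hξ', hD'⟩, rfl⟩ ?_
  rintro _ ⟨ξ, ⟨hξ, hD⟩, rfl⟩
  obtain ⟨p, hp, hV⟩ := exists_mem_feasiblePairs_of_Dmdp_le hξ' hξ hD (hf ξ hξ).2 r
  exact (hc p hp).trans_eq hV.symm

end

variable (S A : Type*) [Fintype S] [Fintype A] [DecidableEq S] [DecidableEq A]

/-- **Reformulation of `V^π_ρ(ξ')`** (Lemma 6). For fixed `π ∈ Π₀`, `ρ ≥ 0` and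
`ξ' ∈ Ξ₀`, the distributionally robust value function equals
`min_{Q ∈ 𝒬₀, Σ_x μ'(x) D(Q'(·|x)‖Q(·|x)) ≤ ρ} Σ_x r(x) μ_{π,Q}(x)`,
and the minimum is attained. -/
theorem Vrho_kernel_reformulation
    (r : S → A → ℝ)
    (π : S → A → ℝ) (hπ : π ∈ policyPos S A)
    (ρ : ℝ) (hρ : 0 ≤ ρ)
    (ξ' : S × A × S → ℝ) (hξ' : ξ' ∈ Xi0Set S A)
    (f : (S × A × S → ℝ) → (S × A × S → ℝ))
    (hf : ∀ ζ0 ∈ Xi0Set S A, f ζ0 ∈ Xi0Set S A ∧ IsShift S A π ζ0 (f ζ0)) :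
    ∃ Q ∈ kernel0 S A, InUncertaintySet S A ξ' ρ Q ∧
      ∃ μ : S × A → ℝ, IsStatDist S A π Q μ ∧
        (∑ x : S × A, r x.1 x.2 * μ x) = Vrho S A r f ρ ξ' ∧
        ∀ Q₂ ∈ kernel0 S A, InUncertaintySet S A ξ' ρ Q₂ →
          ∀ μ₂ : S × A → ℝ, IsStatDist S A π Q₂ μ₂ →
            Vrho S A r f ρ ξ' ≤ ∑ x : S × A, r x.1 x.2 * μ₂ x := by
  have hD' : Dmdp S A ξ' ξ' ≤ ρ := by rw [Dmdp_self]; exact EReal.coe_nonneg.2 hρ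
  obtain ⟨p₀, hp₀, -⟩ := exists_mem_feasiblePairs_of_Dmdp_le hξ' hξ' hD' (hf ξ' hξ').2 r
  obtain ⟨p, hp, hmin⟩ := (isCompact_feasiblePairs hξ'.1.1 ρ).exists_isMinOn ⟨p₀, hp₀⟩
    (f := fun p => ∑ x : S × A, r x.1 x.2 * p.2 x) (by fun_prop)
  have hVrho := le_antisymm (le_Vrho_of_forall_feasiblePairs hξ' hf hρ (isMinOn_iff.1 hmin))
    (Vrho_le_of_mem_feasiblePairs hπ hξ' hf hp r)
  obtain ⟨⟨⟨hQ, hunc⟩, hμ⟩, hμst⟩ := hp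
  have hQ0 := mem_kernel0_of_inUncertaintySet hξ' hQ hunc
  have hμpos := pos_of_stationary_of_irreducible (saChain_nonneg hπ.1 hQ)
    (saChain_irreducible hπ.2 hQ0.2) hμ hμst
  refine ⟨p.1, hQ0, hunc, p.2, ⟨hμpos, hμ.2, hμst⟩, hVrho, fun Q₂ hQ₂ hunc₂ μ₂ hμ₂ => ?_⟩
  exact Vrho_le_of_mem_feasiblePairs hπ hξ' hf (p := (Q₂, μ₂))
    ⟨⟨⟨hQ₂.1, hunc₂⟩, fun x => (hμ₂.1 x).le, hμ₂.2.1⟩, hμ₂.2.2⟩ r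

end OfflineRL
end
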